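/- Let t*(n) = ⌊π/(2·arccos(λ(n)))⌋ where λ(n) = (n−2+√(n²+4n−4))/(2n). Then t*(n) = Θ(n), i.e., there exist N ∈ ℕ and positive constants c₁, c₂ such that c₁·n ≤ t*(n) ≤ c₂·n for all n ≥ N. -/

import Mathlib

/-!
Write `θ = arccos λ(n)`. Rationalizing, `1 - λ(n) = 4 / (n (n + 2 + √(n² + 4n - 4)))`, which lies
between `1/n²` and `2/n²`. The elementary bounds `1 - θ²/2 ≤ cos θ ≤ 1 - 2θ²/π²` on `[0, π]` then
give `1/n ≤ θ ≤ π/n`, so `π/(2θ)` lies between `n/2` and `πn/2 ≤ 2n`, and so does its floor up to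
an additive `1`.
-/

open Real

namespace Real

theorem two_mul_one_sub_le_sq_arccos {y : ℝ} (hy₁ : -1 ≤ y) (hy₂ : y ≤ 1) :
    2 * (1 - y) ≤ arccos y ^ 2 := by
  have h := one_sub_sq_div_two_le_cos (x := arccos y)
  rw [cos_arccos hy₁ hy₂] at h
  linarith

theorem sq_arccos_le {y : ℝ} (hy₁ : -1 ≤ y) (hy₂ : y ≤ 1) :
    arccos y ^ 2 ≤ π ^ 2 / 2 * (1 - y) := by
  have h := cos_le_one_sub_mul_cos_sq (x := arccos y)
    (by rw [abs_of_nonneg (arccos_nonneg y)]; exact arccos_le_pi y)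
  rw [cos_arccos hy₁ hy₂] at h
  calc arccos y ^ 2 = π ^ 2 / 2 * (2 / π ^ 2 * arccos y ^ 2) := by field_simp
    _ ≤ π ^ 2 / 2 * (1 - y) := by gcongr; linarith

end Real

/-- `λ(n)` of the statement, extended to real arguments. -/
noncomputable def lam (x : ℝ) : ℝ := (x - 2 + √(x ^ 2 + 4 * x - 4)) / (2 * x)

theorem one_sub_lam {x : ℝ} (hx : 1 ≤ x) :
    1 - lam x = 4 / (x * (x + 2 + √(x ^ 2 + 4 * x - 4))) := by
  have hs := sq_sqrt (show 0 ≤ x ^ 2 + 4 * x - 4 by nlinarith)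
  have hs₀ := sqrt_nonneg (x ^ 2 + 4 * x - 4)
  rw [lam]
  generalize √(x ^ 2 + 4 * x - 4) = s at *
  rw [eq_div_iff (by positivity)]
  field_simp
  linear_combination -hs

theorem le_sqrt_lam_radicand {x : ℝ} (hx : 1 ≤ x) : x ≤ √(x ^ 2 + 4 * x - 4) :=
  le_sqrt_of_sq_le (by nlinarith)

theorem sqrt_lam_radicand_le {x : ℝ} (hx : -2 ≤ x) : √(x ^ 2 + 4 * x - 4) ≤ x + 2 := by
  rw [sqrt_le_iff]
  constructor <;> nlinarith

theorem one_div_sq_le_one_sub_lam {x : ℝ} (hx : 2 ≤ x) : 1 / x ^ 2 ≤ 1 - lam x := by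
  rw [one_sub_lam (by linarith), div_le_div_iff₀ (by positivity) (by positivity)]
  nlinarith [sqrt_lam_radicand_le (x := x) (by linarith)]

theorem one_sub_lam_le {x : ℝ} (hx : 1 ≤ x) : 1 - lam x ≤ 2 / x ^ 2 := by
  rw [one_sub_lam hx, div_le_div_iff₀ (by positivity) (by positivity)]
  nlinarith [le_sqrt_lam_radicand hx]

theorem lam_mem_Icc {x : ℝ} (hx : 2 ≤ x) : lam x ∈ Set.Icc (-1) 1 := by
  have h₁ := one_div_sq_le_one_sub_lam hx
  have h₂ : 0 ≤ lam x := div_nonneg (by linarith [le_sqrt_lam_radicand (x := x) (by linarith)])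
    (by linarith)
  exact ⟨by linarith, by linarith [show 0 < 1 / x ^ 2 by positivity]⟩

theorem one_div_le_arccos_lam {x : ℝ} (hx : 2 ≤ x) : 1 / x ≤ arccos (lam x) := by
  obtain ⟨hl₁, hl₂⟩ := lam_mem_Icc hx
  rw [← pow_le_pow_iff_left₀ (by positivity) (arccos_nonneg _) two_ne_zero]
  calc (1 / x) ^ 2 ≤ 2 * (1 / x ^ 2) := by
        rw [div_pow, one_pow]; linarith [show 0 < 1 / x ^ 2 by positivity]
    _ ≤ 2 * (1 - lam x) := by gcongr; exact one_div_sq_le_one_sub_lam hx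
    _ ≤ arccos (lam x) ^ 2 := two_mul_one_sub_le_sq_arccos hl₁ hl₂

theorem arccos_lam_le {x : ℝ} (hx : 2 ≤ x) : arccos (lam x) ≤ π / x := by
  obtain ⟨hl₁, hl₂⟩ := lam_mem_Icc hx
  rw [← pow_le_pow_iff_left₀ (arccos_nonneg _) (by positivity) two_ne_zero]
  calc arccos (lam x) ^ 2 ≤ π ^ 2 / 2 * (1 - lam x) := sq_arccos_le hl₁ hl₂
    _ ≤ π ^ 2 / 2 * (2 / x ^ 2) := by gcongr; exact one_sub_lam_le (by linarith)
    _ = (π / x) ^ 2 := by ring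

theorem half_le_pi_div_two_arccos_lam {x : ℝ} (hx : 2 ≤ x) :
    x / 2 ≤ π / (2 * arccos (lam x)) := by
  have hθ : 0 < arccos (lam x) :=
    (one_div_pos.2 (by linarith)).trans_le (one_div_le_arccos_lam hx)
  calc x / 2 = π / (2 * (π / x)) := by field_simp
    _ ≤ π / (2 * arccos (lam x)) := by gcongr; exact arccos_lam_le hx

theorem pi_div_two_arccos_lam_le {x : ℝ} (hx : 2 ≤ x) :
    π / (2 * arccos (lam x)) ≤ 2 * x := by
  calc π / (2 * arccos (lam x)) ≤ π / (2 * (1 / x)) := by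
        gcongr
        exact one_div_le_arccos_lam hx
    _ = π / 2 * x := by field_simp
    _ ≤ 2 * x := by gcongr; linarith [pi_le_four]

theorem measurement_time_bigTheta :
    ∃ (N : ℕ) (c₁ c₂ : ℝ), 0 < c₁ ∧ 0 < c₂ ∧
      ∀ n ≥ N,
        c₁ * (n : ℝ) ≤
            (⌊Real.pi / (2 * Real.arccos
              (((n : ℝ) - 2 + Real.sqrt ((n : ℝ) ^ 2 + 4 * n - 4)) / (2 * n)))⌋ : ℝ) ∧
          (⌊Real.pi / (2 * Real.arccos
              (((n : ℝ) - 2 + Real.sqrt ((n : ℝ) ^ 2 + 4 * n - 4)) / (2 * n)))⌋ : ℝ) ≤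
            c₂ * (n : ℝ) := by
  refine ⟨4, 1 / 4, 2, by norm_num, by norm_num, fun n hn => ?_⟩
  have hx : (4 : ℝ) ≤ n := by exact_mod_cast hn
  have hlow := half_le_pi_div_two_arccos_lam (x := n) (by linarith)
  have hupp := pi_div_two_arccos_lam_le (x := n) (by linarith)
  change _ ≤ (⌊π / (2 * arccos (lam n))⌋ : ℝ) ∧ (⌊π / (2 * arccos (lam n))⌋ : ℝ) ≤ _
  exact ⟨by linarith [Int.sub_one_lt_floor (π / (2 * arccos (lam n)))],
    by linarith [Int.floor_le (π / (2 * arccos (lam n)))]⟩
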